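/- For F = {1,2}, the exceptional Hermite polynomials H_n^F satisfy for all n ≥ 0 the seven-term recurrence relation (4/3)n(n-1)(n-2) H_{n-3}^F(x) + 2n(n-1) H_{n-1}^F(x) + (n-2) H_{n+1}^F(x) + [(n-1)(n-2)/(6(n+1)(n+2))] H_{n+3}^F(x) = (4x^3/3 + 2x) H_n^F(x). -/

import Mathlib

/-!
Expanding the Wronskian along its first row and using `H_m' = 2m H_{m-1}` gives
`H^F_m = 16 H_m - 32 m x H_{m-1} + 16 m (m-1) (2x² + 1) H_{m-2}`. Every term of the recurrence
is then a combination of values `H_k(x)`, and the three-term recurrence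
`H_{k+1} = 2x H_k - 2k H_{k-1}` (valid for `k ≥ 0` with `H_{-1} = 0`) reduces it to a rational
identity in `n` and `x`.

The three-term recurrence comes from `H_{n+1}' = 2(n+1) H_n`, which is read off the explicit sum:
by induction `H_{n+1} - 2X H_n + H_n'` has derivative zero, and its constant term vanishes.
-/

open Polynomial

/-- The (physicists') Hermite polynomial `H_n`. -/
noncomputable def hermiteP (n : ℕ) : Polynomial ℝ :=
  (n.factorial : ℝ) •
    ∑ j ∈ Finset.range (n / 2 + 1),
      ((-1 : ℝ) ^ j / ((j.factorial : ℝ) * ((n - 2 * j).factorial : ℝ))) •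
        (C (2 : ℝ) * X) ^ (n - 2 * j)

/-- Hermite polynomial with integer index; zero for negative index. -/
noncomputable def hermiteZ (m : ℤ) : Polynomial ℝ :=
  if m < 0 then 0 else hermiteP m.toNat

/-- The exceptional Hermite polynomial `H_n^F` for `F = {1,2}` (so `u_F = 0`), evaluated
at `x`: a `3×3` Wronskian determinant. -/
noncomputable def excH12 (m : ℤ) (x : ℝ) : ℝ :=
  Matrix.det
    !![(hermiteZ m).eval x, (derivative (hermiteZ m)).eval x,
         (derivative (derivative (hermiteZ m))).eval x;
       (hermiteP 1).eval x, (derivative (hermiteP 1)).eval x,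
         (derivative (derivative (hermiteP 1))).eval x;
       (hermiteP 2).eval x, (derivative (hermiteP 2)).eval x,
         (derivative (derivative (hermiteP 2))).eval x]

lemma hermiteP_zero : hermiteP 0 = 1 := by
  simp [hermiteP]

lemma hermiteP_one : hermiteP 1 = C 2 * X := by
  simp [hermiteP]

lemma derivative_hermiteP_succ (n : ℕ) :
    derivative (hermiteP (n + 1)) = C (2 * ((n : ℝ) + 1)) * hermiteP n := by
  unfold hermiteP
  rw [derivative_smul, map_sum, ← Finset.sum_subset
    (Finset.range_subset_range.mpr (show n / 2 + 1 ≤ (n + 1) / 2 + 1 by omega))]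
  · rw [smul_eq_C_mul, smul_eq_C_mul, Finset.mul_sum, Finset.mul_sum, Finset.mul_sum]
    refine Finset.sum_congr rfl fun j hj => ?_
    simp only [Finset.mem_range] at hj
    obtain ⟨m, hm⟩ : ∃ m, n - 2 * j = m := ⟨_, rfl⟩
    rw [hm, show n + 1 - 2 * j = m + 1 by omega, derivative_smul, derivative_pow,
      derivative_C_mul, derivative_X]
    have key : ((n + 1).factorial : ℝ) * ((-1) ^ j / (j.factorial * (m + 1).factorial))
        * ((m + 1 : ℕ) : ℝ) * 2
        = 2 * (n + 1) * n.factorial * ((-1) ^ j / (j.factorial * m.factorial)) := by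
      rw [Nat.factorial_succ, Nat.factorial_succ]
      push_cast
      field_simp
    have hC := congrArg C key
    simp only [map_mul] at hC ⊢
    simp only [smul_eq_C_mul, Nat.add_sub_cancel, mul_one]
    linear_combination (C 2 * X) ^ m * hC
  · intro j hj hj'
    simp only [Finset.mem_range, not_lt] at hj hj'
    rw [show n + 1 - 2 * j = 0 by omega]
    simp

lemma eval_zero_hermiteP_add_two (n : ℕ) :
    (hermiteP (n + 2)).eval 0 = -(2 * ((n : ℝ) + 1)) * (hermiteP n).eval 0 := by
  unfold hermiteP
  rw [show (n + 2) / 2 + 1 = n / 2 + 1 + 1 by omega, Finset.sum_range_succ']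
  simp only [eval_smul, eval_add, eval_finsetSum, eval_pow, eval_mul, eval_C, eval_X, mul_zero,
    smul_eq_mul, Nat.sub_zero, zero_pow (M₀ := ℝ) (show n + 2 ≠ 0 by omega), add_zero,
    Finset.mul_sum]
  refine Finset.sum_congr rfl fun i hi => ?_
  rw [show n + 2 - 2 * (i + 1) = n - 2 * i by omega]
  rcases eq_or_ne (n - 2 * i) 0 with h | h
  · obtain rfl : n = 2 * i := by simp only [Finset.mem_range] at hi; omega
    rw [h, Nat.factorial_succ, Nat.factorial_succ, Nat.factorial_succ i, pow_succ]
    push_cast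
    field_simp
    ring
  · simp [zero_pow h]

lemma hermiteP_succ (n : ℕ) :
    hermiteP (n + 1) = C 2 * X * hermiteP n - derivative (hermiteP n) := by
  induction n with
  | zero => simp [hermiteP_zero, hermiteP_one]
  | succ n ih =>
    rw [← sub_eq_zero]
    set D := hermiteP (n + 2) - (C 2 * X * hermiteP (n + 1) - derivative (hermiteP (n + 1)))
    have hD : derivative D = 0 := by
      simp only [D, derivative_sub, derivative_mul, derivative_C, derivative_X,
        derivative_hermiteP_succ, Nat.cast_add, Nat.cast_one, map_mul, map_add, map_one,
        derivative_one]
      linear_combination C 2 * (C (n : ℝ) + 1) * ih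
    have hD0 : D.eval 0 = 0 := by
      simp [D, derivative_hermiteP_succ, eval_zero_hermiteP_add_two]
    rw [eq_C_of_derivative_eq_zero hD, coeff_zero_eq_eval_zero, hD0, map_zero]

lemma hermiteZ_of_neg {m : ℤ} (hm : m < 0) : hermiteZ m = 0 := if_pos hm

lemma hermiteZ_natCast (n : ℕ) : hermiteZ n = hermiteP n := by
  simp [hermiteZ]

lemma derivative_hermiteZ (m : ℤ) :
    derivative (hermiteZ m) = C (2 * (m : ℝ)) * hermiteZ (m - 1) := by
  rcases lt_trichotomy m 0 with hm | rfl | hm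
  · simp [hermiteZ_of_neg hm, hermiteZ_of_neg (show m - 1 < 0 by omega)]
  · simp [hermiteZ, hermiteP_zero]
  · obtain ⟨k, rfl⟩ : ∃ k : ℕ, m = k + 1 := ⟨m.toNat - 1, by omega⟩
    rw [← Nat.cast_succ, hermiteZ_natCast, derivative_hermiteP_succ, Nat.cast_succ,
      add_sub_cancel_right, hermiteZ_natCast]
    norm_cast

lemma eval_hermiteZ_add_one (x : ℝ) {m : ℤ} (hm : 0 ≤ m) :
    (hermiteZ (m + 1)).eval x
      = 2 * x * (hermiteZ m).eval x - 2 * m * (hermiteZ (m - 1)).eval x := by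
  lift m to ℕ using hm
  rw [← Nat.cast_succ, hermiteZ_natCast, hermiteP_succ, ← hermiteZ_natCast, derivative_hermiteZ]
  simp only [eval_sub, eval_mul, eval_C, eval_X]

/-- The first-row expansion of the Wronskian `excH12`, with the Hermite values `H_k(x)` replaced by
an arbitrary sequence `A k`. -/
def excH12Of (A : ℤ → ℝ) (x : ℝ) (m : ℤ) : ℝ :=
  16 * A m - 32 * m * x * A (m - 1) + 16 * m * (m - 1) * (2 * x ^ 2 + 1) * A (m - 2)

lemma excH12_eq_excH12Of (m : ℤ) (x : ℝ) :
    excH12 m x = excH12Of (fun k => (hermiteZ k).eval x) x m := by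
  have h1 : derivative (hermiteP 1) = C 2 := by
    simpa [hermiteP_zero] using derivative_hermiteP_succ 0
  have h2 : hermiteP 2 = C 4 * X ^ 2 - C 2 := by
    rw [hermiteP_succ, h1, hermiteP_one]
    simp only [map_ofNat]
    ring
  have hd2 :
      derivative (derivative (hermiteZ m)) = C (4 * (m : ℝ) * (m - 1)) * hermiteZ (m - 2) := by
    rw [derivative_hermiteZ, derivative_C_mul, derivative_hermiteZ, ← mul_assoc, ← C_mul,
      sub_sub]
    congr 2
    push_cast
    ring
  rw [excH12, Matrix.det_fin_three, hd2, derivative_hermiteZ, h1, h2, hermiteP_one]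
  simp [excH12Of]
  ring

theorem excH12Of_seven_term_recurrence (A : ℤ → ℝ) (x : ℝ) (n : ℕ)
    (hneg : ∀ m : ℤ, m < 0 → A m = 0)
    (hrec : ∀ m : ℤ, 0 ≤ m → A (m + 1) = 2 * x * A m - 2 * m * A (m - 1)) :
    4 / 3 * (n : ℝ) * ((n : ℝ) - 1) * ((n : ℝ) - 2) * excH12Of A x ((n : ℤ) - 3)
      + 2 * (n : ℝ) * ((n : ℝ) - 1) * excH12Of A x ((n : ℤ) - 1)
      + ((n : ℝ) - 2) * excH12Of A x ((n : ℤ) + 1)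
      + ((n : ℝ) - 1) * ((n : ℝ) - 2) / (6 * ((n : ℝ) + 1) * ((n : ℝ) + 2))
          * excH12Of A x ((n : ℤ) + 3)
    = (4 * x ^ 3 / 3 + 2 * x) * excH12Of A x (n : ℤ) := by
  rcases lt_or_ge n 4 with hn | hn
  · -- the recurrence at `m = -1` is not available, so every value is reduced to `A 0`
    have e (i : ℕ) : A (i + 1) = 2 * x * A i - 2 * i * A (i - 1) := hrec i (Nat.cast_nonneg i)
    have e6 := e 6
    have e5 := e 5
    have e4 := e 4
    have e3 := e 3
    have e2 := e 2
    have e1 := e 1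
    have e0 := e 0
    norm_num at e0 e1 e2 e3 e4 e5 e6
    interval_cases n <;>
    · simp only [excH12Of]
      norm_num [e6, e5, e4, e3, e2, e1, e0, hneg]
      ring
  · obtain ⟨k, rfl⟩ : ∃ k, n = k + 4 := ⟨n - 4, by omega⟩
    -- the seven recurrences used, at `m = n - 4, …, n + 2`, all have `m ≥ 0`
    have e (i : ℕ) : A (k + i + 1) = 2 * x * A (k + i) - 2 * (k + i) * A (k + i - 1) := by
      exact_mod_cast hrec (k + i) (by positivity)
    have e6 := e 6
    have e5 := e 5
    have e4 := e 4
    have e3 := e 3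
    have e2 := e 2
    have e1 := e 1
    have e0 := e 0
    simp only [excH12Of]
    push_cast at e0 e1 e2 e3 e4 e5 e6 ⊢
    ring_nf at e0 e1 e2 e3 e4 e5 e6 ⊢
    rw [e6, e5, e4, e3, e2, e1, e0]
    field_simp
    ring

theorem excHermite_seven_term_recurrence (n : ℕ) (x : ℝ) :
    4 / 3 * (n : ℝ) * ((n : ℝ) - 1) * ((n : ℝ) - 2) * excH12 ((n : ℤ) - 3) x
      + 2 * (n : ℝ) * ((n : ℝ) - 1) * excH12 ((n : ℤ) - 1) x
      + ((n : ℝ) - 2) * excH12 ((n : ℤ) + 1) x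
      + ((n : ℝ) - 1) * ((n : ℝ) - 2) / (6 * ((n : ℝ) + 1) * ((n : ℝ) + 2))
          * excH12 ((n : ℤ) + 3) x
    = (4 * x ^ 3 / 3 + 2 * x) * excH12 (n : ℤ) x := by
  simp only [excH12_eq_excH12Of]
  exact excH12Of_seven_term_recurrence _ x n (fun m hm => by simp [hermiteZ_of_neg hm])
    (fun m hm => eval_hermiteZ_add_one x hm)
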